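/- For every integer k ≥ 1: every finite connected graph of metric dimension at most k on n vertices has at most n(3^k − 1)/2 edges, and for every ε > 0 there exists a finite connected graph G of metric dimension at most k with at least (1 − ε)(3^k − 1)|V(G)|/2 edges. That is, the maximum number of edges in an n-vertex graph of metric dimension k is n(3^k − 1)(1 − o(1))/2. -/

import Mathlib

open SimpleGraph

/-- `S` is a resolving set for `G`: any two distinct vertices are distinguished
by their graph distance to some landmark in `S`. -/
def IsResolvingSet {V : Type*} (G : SimpleGraph V) (S : Set V) : Prop :=
  ∀ u v : V, u ≠ v → ∃ w ∈ S, G.dist u w ≠ G.dist v w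

/-- The metric dimension of `G`: the least size of a (finite) resolving set. -/
noncomputable def metricDim {V : Type*} (G : SimpleGraph V) : ℕ :=
  sInf {k | ∃ S : Finset V, IsResolvingSet G ↑S ∧ S.card = k}

/-- Distance from an edge `e = {u,v}` to a vertex `w`: `min (d(u,w)) (d(v,w))`. -/
noncomputable def edgeDist {V : Type*} (G : SimpleGraph V) (e : Sym2 V) (w : V) : ℕ :=
  Sym2.lift ⟨fun u v => min (G.dist u w) (G.dist v w), fun u v => by simp [min_comm]⟩ e

/-- `S` is an edge resolving set for `G`: any two distinct edges are distinguished
by their distance to some landmark in `S`. -/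
def IsEdgeResolvingSet {V : Type*} (G : SimpleGraph V) (S : Set V) : Prop :=
  ∀ e ∈ G.edgeSet, ∀ f ∈ G.edgeSet, e ≠ f → ∃ w ∈ S, edgeDist G e w ≠ edgeDist G f w

/-- The edge metric dimension of `G`: the least size of a (finite) edge resolving set. -/
noncomputable def edgeMetricDim {V : Type*} (G : SimpleGraph V) : ℕ :=
  sInf {k | ∃ S : Finset V, IsEdgeResolvingSet G ↑S ∧ S.card = k}

/-- `G` contains `H` as a subgraph: there is an injective graph homomorphism `H → G`. -/
def Contains {V W : Type*} (G : SimpleGraph V) (H : SimpleGraph W) : Prop :=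
  ∃ f : H →g G, Function.Injective f

/-- The graph `D_k` on `ℤ_{≥0}^k`: distinct points are adjacent iff they differ
by at most 1 in every coordinate. -/
def Dgraph (k : ℕ) : SimpleGraph (Fin k → ℕ) where
  Adj x y := x ≠ y ∧ ∀ i, x i ≤ y i + 1 ∧ y i ≤ x i + 1
  symm := ⟨fun _x _y h => ⟨h.1.symm, fun i => ⟨(h.2 i).2, (h.2 i).1⟩⟩⟩
  loopless := ⟨fun _x h => h.1 rfl⟩

/-!
If `S` resolves `G`, a neighbour `v` of `u` is determined by the vector
`(d(v, w) - d(u, w))_{w ∈ S} ∈ {-1, 0, 1}^S`, which cannot vanish; so every degree is below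
`3^|S|`, and the handshake lemma gives the upper bound.

For the lower bound, take in the king's graph `Dgraph k` the core
`A_s = {x : x i ≤ s, x i + x j ≤ s + 1 (i ≠ j)}` together with the landmarks
`(s + 1) e_j`. The second condition makes `d(x, (s + 1) e_j) = s + 1 - x j` on the core, so the
`k` landmarks resolve the graph, while all vertices except those near the boundary of `A_s`, a
vanishing fraction, have the full degree `3^k - 1`.
-/

open Finset

namespace SimpleGraph

variable {V : Type*} {G : SimpleGraph V} {u v : V}

lemma two_mul_ncard_edgeSet_eq_sum_degrees [Fintype V] [DecidableRel G.Adj] :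
    2 * G.edgeSet.ncard = ∑ v, G.degree v := by
  rw [sum_degrees_eq_twice_card_edges, ← coe_edgeFinset, Set.ncard_coe_finset]

lemma card_mul_le_two_mul_ncard_edgeSet [Fintype V] [DecidableRel G.Adj] {d : ℕ} (I : Finset V)
    (hI : ∀ v ∈ I, d ≤ G.degree v) : #I * d ≤ 2 * G.edgeSet.ncard := by
  rw [two_mul_ncard_edgeSet_eq_sum_degrees, card_eq_sum_ones, sum_mul, one_mul]
  exact (sum_le_sum hI).trans (sum_le_sum_of_subset (subset_univ I))

lemma Adj.dist_le_dist_add_one (h : G.Adj u v) (w : V) : G.dist v w ≤ G.dist u w + 1 := by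
  have := h.diff_dist_adj (u := w)
  rw [dist_comm, dist_comm (u := w)] at this
  omega

lemma Walk.le_add_length_of_adj {f : V → ℕ} (hf : ∀ a b, G.Adj a b → f a ≤ f b + 1)
    (p : G.Walk u v) : f u ≤ f v + p.length := by
  induction p with
  | nil => simp
  | cons h _ ih => have := hf _ _ h; rw [length_cons]; omega

lemma Reachable.le_add_dist_of_adj {f : V → ℕ} (hf : ∀ a b, G.Adj a b → f a ≤ f b + 1)
    (h : G.Reachable u v) : f u ≤ f v + G.dist u v := by
  obtain ⟨p, hp⟩ := h.exists_walk_length_eq_dist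
  exact hp ▸ p.le_add_length_of_adj hf

lemma exists_walk_length_le_of_eq_or_adj (p : ℕ → V)
    (hp : ∀ t, p t = p (t + 1) ∨ G.Adj (p t) (p (t + 1)))
    (T : ℕ) : ∃ w : G.Walk (p 0) (p T), w.length ≤ T := by
  induction T with
  | zero => exact ⟨Walk.nil, le_rfl⟩
  | succ T ih =>
    obtain ⟨w, hw⟩ := ih
    rcases hp T with h | h
    · exact ⟨w.copy rfl h, by simp; omega⟩
    · exact ⟨w.concat h, by simp; omega⟩

end SimpleGraph

lemma isResolvingSet_univ {V : Type*} {G : SimpleGraph V} (hG : G.Preconnected) :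
    IsResolvingSet G Set.univ := fun u v huv =>
  ⟨v, trivial, by rw [dist_self]; exact ((hG u v).pos_dist_of_ne huv).ne'⟩

lemma exists_isResolvingSet_card_eq_metricDim {V : Type*} [Fintype V] {G : SimpleGraph V}
    (hG : G.Preconnected) : ∃ S : Finset V, IsResolvingSet G ↑S ∧ #S = metricDim G :=
  Nat.sInf_mem (s := {k | ∃ S : Finset V, IsResolvingSet G ↑S ∧ #S = k})
    ⟨_, univ, by simpa using isResolvingSet_univ hG, rfl⟩

lemma IsResolvingSet.degree_lt_three_pow {V : Type*} {G : SimpleGraph V} {S : Finset V}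
    (hS : IsResolvingSet G S) (u : V) [Fintype (G.neighborSet u)] : G.degree u < 3 ^ #S := by
  classical
  let code : G.neighborSet u → (S → Fin 3) := fun v w =>
    ⟨G.dist v w + 1 - G.dist u w, by have := Adj.dist_le_dist_add_one v.2 w; omega⟩
  have decode (v : G.neighborSet u) {w : V} (hw : w ∈ S) :
      G.dist v w + 1 = code v ⟨w, hw⟩ + G.dist u w := by
    have := Adj.dist_le_dist_add_one (G.adj_symm v.2) w
    simp only [code]
    omega
  have hinj : Function.Injective code := by
    intro v v' h
    by_contra hne
    obtain ⟨w, hw, hd⟩ := hS v v' (Subtype.coe_ne_coe.mpr hne)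
    have h1 := decode v hw
    have h2 := decode v' hw
    rw [h] at h1
    omega
  have hmiss (v : G.neighborSet u) : code v ≠ fun _ => 1 := by
    intro h
    obtain ⟨w, hw, hd⟩ := hS v u (G.ne_of_adj v.2).symm
    have := decode v hw
    rw [h] at this
    simp only [Fin.val_one] at this
    omega
  calc G.degree u = Fintype.card (G.neighborSet u) := (card_neighborSet_eq_degree G u).symm
    _ < Fintype.card (S → Fin 3) :=
      Fintype.card_lt_of_injective_of_notMem code hinj fun ⟨v, hv⟩ => hmiss v hv
    _ = 3 ^ #S := by simp

theorem two_mul_ncard_edgeSet_le_of_metricDim_le {V : Type*} [Fintype V] {G : SimpleGraph V}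
    (hG : G.Connected) {k : ℕ} (hdim : metricDim G ≤ k) :
    2 * G.edgeSet.ncard ≤ Fintype.card V * (3 ^ k - 1) := by
  classical
  obtain ⟨S, hS, hcard⟩ := exists_isResolvingSet_card_eq_metricDim hG.preconnected
  have hdeg (v : V) : G.degree v ≤ 3 ^ k - 1 := by
    have := hS.degree_lt_three_pow v
    have := Nat.pow_le_pow_right (show 0 < 3 by norm_num) (hcard ▸ hdim)
    omega
  calc 2 * G.edgeSet.ncard = ∑ v, G.degree v := two_mul_ncard_edgeSet_eq_sum_degrees
    _ ≤ ∑ _v : V, (3 ^ k - 1) := sum_le_sum fun v _ => hdeg v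
    _ = Fintype.card V * (3 ^ k - 1) := by simp

/-- The set meets every line of the box `{0, …, N - 1}^ι` in direction `i` at most once. -/
lemma card_filter_eq_update_mul_le {ι : Type*} [Fintype ι] [DecidableEq ι] (N : ℕ) (i : ι)
    (h : (ι → ℕ) → ℕ) :
    #{x ∈ Fintype.piFinset fun _ => range N | x i = h (Function.update x i 0)} * N ≤
      N ^ Fintype.card ι := by
  set L := {x ∈ Fintype.piFinset fun _ : ι => range N | x i = h (Function.update x i 0)}
  calc #L * N = #(L ×ˢ range N) := by rw [card_product, card_range]
    _ ≤ #(Fintype.piFinset fun _ : ι => range N) := by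
      refine card_le_card_of_injOn (fun p => Function.update p.1 i p.2) (fun p hp => ?_) ?_
      · simp only [coe_product, Set.mem_prod, mem_coe, L, mem_filter, Fintype.mem_piFinset] at hp
        simp only [mem_coe, Fintype.mem_piFinset]
        intro j
        rcases eq_or_ne j i with rfl | hj
        · simpa using hp.2
        · simpa [hj] using hp.1.1 j
      · rintro ⟨x, c⟩ hx ⟨y, d⟩ hy hxy
        simp only [coe_product, Set.mem_prod, mem_coe, L, mem_filter] at hx hy hxy
        have hcd : c = d := by simpa using congrFun hxy i
        have hupd : Function.update x i 0 = Function.update y i 0 := by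
          simpa using congrArg (Function.update · i 0) hxy
        refine Prod.ext (funext fun j => ?_) hcd
        rcases eq_or_ne j i with rfl | hj
        · show x _ = y _
          rw [hx.1.2, hy.1.2, hupd]
        · simpa [hj] using congrFun hxy j
    _ = N ^ Fintype.card ι := by simp

namespace MetricDimExtremal

variable {k s : ℕ}

def InCore (s : ℕ) (x : Fin k → ℕ) : Prop :=
  (∀ i, x i ≤ s) ∧ ∀ i j, i ≠ j → x i + x j ≤ s + 1

def landmark (s : ℕ) (j : Fin k) : Fin k → ℕ := Pi.single j (s + 1)

def vertexSet (k s : ℕ) : Set (Fin k → ℕ) := {x | InCore s x} ∪ Set.range (landmark s)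

abbrev graph (k s : ℕ) : SimpleGraph (vertexSet k s) := (Dgraph k).induce (vertexSet k s)

def landmarkVertex (s : ℕ) (j : Fin k) : vertexSet k s := ⟨landmark s j, Or.inr ⟨j, rfl⟩⟩

lemma InCore.mono {x y : Fin k → ℕ} (hx : InCore s x) (hyx : ∀ i, y i ≤ x i) : InCore s y :=
  ⟨fun i => (hyx i).trans (hx.1 i),
    fun i j hij => (add_le_add (hyx i) (hyx j)).trans (hx.2 i j hij)⟩

lemma zero_mem_vertexSet : (0 : Fin k → ℕ) ∈ vertexSet k s :=
  Or.inl ⟨fun _ => Nat.zero_le _, fun _ _ _ => Nat.zero_le _⟩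

lemma le_of_mem_vertexSet {x : Fin k → ℕ} (hx : x ∈ vertexSet k s) (i : Fin k) :
    x i ≤ s + 1 := by
  rcases hx with hx | ⟨j, rfl⟩
  · exact (hx.1 i).trans (Nat.le_succ s)
  · by_cases h : i = j <;> simp [landmark, h]

lemma vertexSet_finite (k s : ℕ) : (vertexSet k s).Finite :=
  (Set.finite_Iic fun _ => s + 1).subset fun _ hx i => le_of_mem_vertexSet hx i

lemma sub_mem_vertexSet {x : Fin k → ℕ} (hx : x ∈ vertexSet k s) (t : ℕ) :
    (fun i => x i - t) ∈ vertexSet k s := by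
  rcases Nat.eq_zero_or_pos t with rfl | ht
  · simpa using hx
  rcases hx with hx | ⟨j, rfl⟩
  · exact Or.inl (hx.mono fun i => Nat.sub_le _ _)
  · refine Or.inl ⟨fun i => ?_, fun i i' hii' => ?_⟩ <;>
      simp only [landmark, Pi.single_apply] <;> split_ifs <;> omega

lemma exists_walk_of_steps {u v : vertexSet k s} (p : ℕ → Fin k → ℕ)
    (hmem : ∀ t, p t ∈ vertexSet k s)
    (hstep : ∀ t i, p t i ≤ p (t + 1) i + 1 ∧ p (t + 1) i ≤ p t i + 1)
    {T : ℕ} (h0 : p 0 = u) (hT : p T = v) : ∃ w : (graph k s).Walk u v, w.length ≤ T := by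
  have hadj (t : ℕ) : (⟨p t, hmem t⟩ : vertexSet k s) = ⟨p (t + 1), hmem (t + 1)⟩ ∨
      (graph k s).Adj ⟨p t, hmem t⟩ ⟨p (t + 1), hmem (t + 1)⟩ := by
    by_cases h : p t = p (t + 1)
    · exact Or.inl (Subtype.ext h)
    · exact Or.inr ⟨h, hstep t⟩
  obtain ⟨w, hw⟩ := exists_walk_length_le_of_eq_or_adj _ hadj T
  exact ⟨w.copy (Subtype.ext h0) (Subtype.ext hT), by simpa using hw⟩

theorem connected (k s : ℕ) : (graph k s).Connected := by
  refine ((graph k s).connected_iff_exists_forall_reachable).mpr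
    ⟨⟨0, zero_mem_vertexSet⟩, fun v => ?_⟩
  obtain ⟨w, -⟩ := exists_walk_of_steps (u := v) (v := ⟨0, zero_mem_vertexSet⟩)
    (fun t i => v.1 i - t) (sub_mem_vertexSet v.2) (fun t i => by omega) (T := s + 1) (by simp)
    (funext fun i => Nat.sub_eq_zero_of_le (le_of_mem_vertexSet v.2 i))
  exact ⟨w.reverse⟩

/-- Moving towards `landmark s j` (coordinate `j` up, all others down) shows `≤`; coordinate `j`
changes by at most one per step, which shows `≥`. -/
lemma dist_landmarkVertex {v : vertexSet k s} (hv : InCore s v.1) (j : Fin k) :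
    (graph k s).dist v (landmarkVertex s j) = s + 1 - v.1 j := by
  apply le_antisymm
  · let p : ℕ → Fin k → ℕ := fun t i =>
      if i = j then min (v.1 j + t) (s + 1) else v.1 i - t
    have hmem (t : ℕ) : p t ∈ vertexSet k s := by
      by_cases ht : v.1 j + t ≤ s
      · refine Or.inl ⟨fun i => ?_, fun i i' hii' => ?_⟩
        · have := hv.1 i
          simp only [p]; split_ifs <;> omega
        · have := hv.2 i i' hii'
          simp only [p]; split_ifs <;> subst_vars <;> omega
      · refine Or.inr ⟨j, funext fun i => ?_⟩
        simp only [p, landmark, Pi.single_apply]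
        split_ifs with hij
        · omega
        · have := hv.2 i j hij; omega
    have hT : p (s + 1 - v.1 j) = landmark s j := funext fun i => by
      have := hv.1 j
      simp only [p, landmark, Pi.single_apply]
      split_ifs with hij
      · omega
      · have := hv.2 i j hij; omega
    obtain ⟨w, hw⟩ := exists_walk_of_steps (u := v) (v := landmarkVertex s j) p hmem
      (fun t i => by simp only [p]; split_ifs <;> omega)
      (funext fun i => by have := hv.1 j; simp only [p]; split_ifs <;> simp_all; omega) hT
    exact (dist_le w).trans hw
  · have := ((connected k s) (landmarkVertex s j) v).le_add_dist_of_adj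
      (f := fun x => x.1 j) fun a b h => (h.2 j).1
    have hj : (landmarkVertex s j).1 j = s + 1 := by simp [landmarkVertex, landmark]
    rw [dist_comm]
    omega

lemma isResolvingSet_range_landmarkVertex (k s : ℕ) :
    IsResolvingSet (graph k s) (Set.range (landmarkVertex s)) := by
  intro u v huv
  by_contra! h
  have eq_of_dist_zero {x : vertexSet k s} {j : Fin k}
      (hx : (graph k s).dist x (landmarkVertex s j) = 0) : x = landmarkVertex s j :=
    (connected k s).dist_eq_zero_iff.mp hx
  rcases u.2 with hu | ⟨i, hi⟩
  · rcases v.2 with hv | ⟨i, hi⟩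
    · refine huv (Subtype.ext (funext fun j => ?_))
      have := h _ ⟨j, rfl⟩
      rw [dist_landmarkVertex hu, dist_landmarkVertex hv] at this
      have := hu.1 j
      have := hv.1 j
      omega
    · obtain rfl : v = landmarkVertex s i := Subtype.ext hi.symm
      exact huv (eq_of_dist_zero ((h _ ⟨i, rfl⟩).trans dist_self))
  · obtain rfl : u = landmarkVertex s i := Subtype.ext hi.symm
    exact huv (eq_of_dist_zero ((h _ ⟨i, rfl⟩).symm.trans dist_self)).symm

theorem metricDim_le (k s : ℕ) : metricDim (graph k s) ≤ k := by
  classical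
  calc metricDim (graph k s) ≤ #(univ.image (landmarkVertex (k := k) s)) :=
        Nat.sInf_le ⟨_, by simpa using isResolvingSet_range_landmarkVertex k s, rfl⟩
    _ ≤ k := card_image_le.trans (by simp)

def InInterior (s : ℕ) (x : Fin k → ℕ) : Prop :=
  (∀ i, 1 ≤ x i ∧ x i + 1 ≤ s) ∧ ∀ i j, i ≠ j → x i + x j + 1 ≤ s

instance : DecidablePred (InInterior (k := k) s) := fun _ => by
  unfold InInterior; infer_instance

/-- All `3 ^ k - 1` king moves `x ↦ x + δ - 1`, `δ ∈ {0, 1, 2}^k \ {1}`, stay in the core. -/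
lemma three_pow_sub_one_le_degree {v : vertexSet k s} [Fintype ((graph k s).neighborSet v)]
    (hv : InInterior s v.1) : 3 ^ k - 1 ≤ (graph k s).degree v := by
  classical
  have hmem (δ : Fin k → Fin 3) : (fun i => v.1 i + δ i - 1) ∈ vertexSet k s := by
    refine Or.inl ⟨fun i => ?_, fun i j hij => ?_⟩
    · have := hv.1 i
      have := (δ i).is_lt
      beta_reduce; omega
    · have := hv.2 i j hij
      have := (δ i).is_lt
      have := (δ j).is_lt
      beta_reduce; omega
  have hne {δ : Fin k → Fin 3} (hδ : δ ≠ 1) : (fun i => v.1 i + δ i - 1) ≠ v.1 := by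
    obtain ⟨i, hi⟩ := Function.ne_iff.mp hδ
    intro h
    have := congrFun h i
    have := (hv.1 i).1
    exact hi (Fin.ext (by simp only [Pi.one_apply, Fin.val_one]; omega))
  let move : {δ : Fin k → Fin 3 // δ ≠ 1} → (graph k s).neighborSet v := fun δ =>
    ⟨⟨_, hmem δ⟩, (hne δ.2).symm, fun i => by
      show v.1 i ≤ v.1 i + δ.1 i - 1 + 1 ∧ v.1 i + δ.1 i - 1 ≤ v.1 i + 1
      have := (hv.1 i).1
      omega⟩
  have hinj : Function.Injective move := fun δ δ' h => Subtype.ext (funext fun i => Fin.ext (by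
    have : v.1 i + δ.1 i - 1 = v.1 i + δ'.1 i - 1 :=
      congrFun (congrArg (fun w : (graph k s).neighborSet v => w.1.1) h) i
    have := (hv.1 i).1
    omega))
  calc 3 ^ k - 1 = Fintype.card {δ : Fin k → Fin 3 // δ ≠ 1} := by
        rw [Fintype.card_subtype_compl, Fintype.card_subtype_eq]; simp
    _ ≤ Fintype.card ((graph k s).neighborSet v) := Fintype.card_le_of_injective move hinj
    _ = (graph k s).degree v := card_neighborSet_eq_degree _ _

lemma exists_eq_sub_update_of_not_inInterior {x : Fin k → ℕ} (hx : x ∈ vertexSet k s)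
    (hI : ¬ InInterior s x) :
    ∃ i j, ∃ c ∈ ({0, s, s + 1} : Finset ℕ), x i = c - Function.update x i 0 j := by
  rcases hx with hx | ⟨j, rfl⟩
  · by_contra! h
    refine hI ⟨fun i => ?_, fun i j hij => ?_⟩
    · have h0 := h i i 0 (by simp)
      have hs := h i i s (by simp)
      have := hx.1 i
      simp only [Function.update_self] at h0 hs
      omega
    · have hs := h i j s (by simp)
      have hs1 := h i j (s + 1) (by simp)
      have := hx.2 i j hij
      simp only [Function.update_of_ne hij.symm] at hs hs1
      omega
  · exact ⟨j, j, s + 1, by simp, by simp [landmark]⟩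

/-- Every non-interior vertex lies on one of the `3 k²` lines `x i = c - x j`,
`c ∈ {0, s, s + 1}`, of the box `{0, …, s + 1}^k` (with `x i` read as `0` on the right). -/
lemma card_not_inInterior_mul_le [Fintype (vertexSet k s)] :
    #{v : vertexSet k s | ¬ InInterior s v.1} * (s + 2) ≤ 3 * k ^ 2 * (s + 2) ^ k := by
  classical
  set idx := (univ : Finset (Fin k)) ×ˢ (univ : Finset (Fin k)) ×ˢ ({0, s, s + 1} : Finset ℕ)
  let line : Fin k × Fin k × ℕ → Finset (Fin k → ℕ) := fun p =>
    {x ∈ Fintype.piFinset fun _ => range (s + 2) | x p.1 = p.2.2 - Function.update x p.1 0 p.2.1}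
  have hcover : #{v : vertexSet k s | ¬ InInterior s v.1} ≤ #(idx.biUnion line) := by
    refine card_le_card_of_injOn Subtype.val (fun v hv => ?_) Subtype.val_injective.injOn
    obtain ⟨i, j, c, hc, hxc⟩ :=
      exists_eq_sub_update_of_not_inInterior v.2 (mem_filter.mp (mem_coe.mp hv)).2
    simp only [coe_biUnion, Set.mem_iUnion, mem_coe]
    refine ⟨(i, j, c), by simp [idx, hc], mem_filter.mpr ⟨?_, hxc⟩⟩
    simpa [Nat.lt_succ_iff] using le_of_mem_vertexSet v.2
  calc #{v : vertexSet k s | ¬ InInterior s v.1} * (s + 2)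
      ≤ (∑ p ∈ idx, #(line p)) * (s + 2) := by gcongr; exact hcover.trans card_biUnion_le
    _ = ∑ p ∈ idx, #(line p) * (s + 2) := sum_mul _ _ _
    _ ≤ ∑ _p ∈ idx, (s + 2) ^ k := sum_le_sum fun p _ => by
      simpa using card_filter_eq_update_mul_le (s + 2) p.1 fun y => p.2.2 - y p.2.1
    _ ≤ 3 * k ^ 2 * (s + 2) ^ k := by
      rw [sum_const, smul_eq_mul, card_product, card_product, card_univ, Fintype.card_fin]
      calc k * (k * #({0, s, s + 1} : Finset ℕ)) * (s + 2) ^ k ≤ k * (k * 3) * (s + 2) ^ k := by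
            gcongr; exact card_le_three
        _ = 3 * k ^ 2 * (s + 2) ^ k := by ring

lemma pow_le_card_vertexSet (t : ℕ) [Fintype (vertexSet k (2 * t))] :
    (t + 1) ^ k ≤ Fintype.card (vertexSet k (2 * t)) := by
  let embed : (Fin k → Fin (t + 1)) → vertexSet k (2 * t) := fun y =>
    ⟨fun i => y i, Or.inl ⟨fun i => by show (y i : ℕ) ≤ 2 * t; have := (y i).is_lt; omega,
      fun i j _ => by
        show (y i : ℕ) + y j ≤ 2 * t + 1
        have := (y i).is_lt
        have := (y j).is_lt
        omega⟩⟩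
  calc (t + 1) ^ k = Fintype.card (Fin k → Fin (t + 1)) := by simp
    _ ≤ _ := Fintype.card_le_of_injective embed fun y y' h =>
      funext fun i => Fin.ext (congrFun (congrArg Subtype.val h) i)

lemma card_not_inInterior_mul_le_card (t : ℕ) [Fintype (vertexSet k (2 * t))] :
    #{v : vertexSet k (2 * t) | ¬ InInterior (2 * t) v.1} * (2 * t + 2) ≤
      3 * k ^ 2 * 2 ^ k * Fintype.card (vertexSet k (2 * t)) :=
  calc _ ≤ 3 * k ^ 2 * (2 * t + 2) ^ k := card_not_inInterior_mul_le
    _ = 3 * k ^ 2 * 2 ^ k * (t + 1) ^ k := by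
      rw [show 2 * t + 2 = 2 * (t + 1) by ring, mul_pow]; ring
    _ ≤ _ := Nat.mul_le_mul_left _ (pow_le_card_vertexSet t)

/-- Take `s = 2t` with `t ≥ 3 k² 2^k / ε`: then at most `ε |V|` vertices are not interior. -/
theorem exists_connected_metricDim_le_ncard_edgeSet_ge (k : ℕ) {ε : ℝ} (hε : 0 < ε) :
    ∃ (V : Type) (_ : Fintype V) (G : SimpleGraph V), G.Connected ∧ metricDim G ≤ k ∧
      (1 - ε) * ((3 : ℝ) ^ k - 1) * (Fintype.card V : ℝ) / 2 ≤ (G.edgeSet.ncard : ℝ) := by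
  classical
  set C : ℕ := 3 * k ^ 2 * 2 ^ k
  set t := ⌈(C : ℝ) / ε⌉₊
  let _ : Fintype (vertexSet k (2 * t)) := (vertexSet_finite k (2 * t)).fintype
  refine ⟨vertexSet k (2 * t), inferInstance, graph k (2 * t), connected k _, metricDim_le k _,
    ?_⟩
  set n := Fintype.card (vertexSet k (2 * t))
  set I := ({v | InInterior (2 * t) v.1} : Finset (vertexSet k (2 * t)))
  set B := ({v | ¬ InInterior (2 * t) v.1} : Finset (vertexSet k (2 * t)))
  have hIB : (#I : ℝ) + #B = n := by exact_mod_cast card_filter_add_card_filter_not _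
  have hI : (#I : ℝ) * (3 ^ k - 1) ≤ 2 * (graph k (2 * t)).edgeSet.ncard := by
    have := Nat.one_le_pow k 3 (by norm_num)
    exact_mod_cast card_mul_le_two_mul_ncard_edgeSet I fun v hv =>
      three_pow_sub_one_le_degree (mem_filter.mp hv).2
  have hB : (#B : ℝ) * (2 * t + 2) ≤ C * n := by
    exact_mod_cast card_not_inInterior_mul_le_card t
  have hCt : (C : ℝ) ≤ ε * t := by
    have := Nat.le_ceil ((C : ℝ) / ε)
    rw [div_le_iff₀ hε] at this
    linarith
  have hBn : (#B : ℝ) ≤ ε * n := by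
    have : (#B : ℝ) * (2 * t + 2) ≤ ε * n * (2 * t + 2) := by
      nlinarith [n.cast_nonneg (α := ℝ), t.cast_nonneg (α := ℝ)]
    exact le_of_mul_le_mul_right this (by positivity)
  have h3k : (1 : ℝ) ≤ 3 ^ k := one_le_pow₀ (by norm_num)
  calc (1 - ε) * (3 ^ k - 1) * n / 2 = ((1 - ε) * n) * (3 ^ k - 1) / 2 := by ring
    _ ≤ #I * (3 ^ k - 1) / 2 := by gcongr; linarith
    _ ≤ _ := by linarith

end MetricDimExtremal

theorem statement6_general (k : ℕ) :
    (∀ (V : Type) [Fintype V], ∀ G : SimpleGraph V, G.Connected → metricDim G ≤ k →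
      2 * G.edgeSet.ncard ≤ Fintype.card V * (3 ^ k - 1)) ∧
    (∀ ε : ℝ, 0 < ε → ∃ (V : Type) (_ : Fintype V) (G : SimpleGraph V),
      G.Connected ∧ metricDim G ≤ k ∧
      (1 - ε) * ((3 : ℝ) ^ k - 1) * (Fintype.card V : ℝ) / 2 ≤ (G.edgeSet.ncard : ℝ)) :=
  ⟨fun _ _ _ hG hdim => two_mul_ncard_edgeSet_le_of_metricDim_le hG hdim,
    fun _ hε => MetricDimExtremal.exists_connected_metricDim_le_ncard_edgeSet_ge k hε⟩

/-- a finite connected `n`-vertex graph of metric dimension at most `k`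
has at most `n (3^k - 1) / 2` edges, and for every `ε > 0` some finite connected
graph of metric dimension at most `k` has at least `(1 - ε)(3^k - 1)|V(G)|/2` edges. -/
theorem statement6 (k : ℕ) (hk : 1 ≤ k) :
    (∀ (V : Type) [Fintype V], ∀ G : SimpleGraph V, G.Connected → metricDim G ≤ k →
      2 * G.edgeSet.ncard ≤ Fintype.card V * (3 ^ k - 1)) ∧
    (∀ ε : ℝ, 0 < ε → ∃ (V : Type) (_ : Fintype V) (G : SimpleGraph V),
      G.Connected ∧ metricDim G ≤ k ∧
      (1 - ε) * ((3 : ℝ) ^ k - 1) * (Fintype.card V : ℝ) / 2 ≤ (G.edgeSet.ncard : ℝ)) :=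
  statement6_general k
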